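/- arXiv:2304.02316 — 8 statements merged into one kernel-verified Lean document; each statement's English description precedes it below -/
import Mathlib

section
/- Let D be any message adversary on Π and let K be a pure chromatic (n−1)-dimensional simplicial complex properly colored by Π. Then the protocol complex construction operator P for D is boundary consistent: for any three facets σ, κ, τ of K, if σ ∩ κ = σ ∩ τ then P(σ) ∩ P(κ) = P(σ) ∩ P(τ). -/
/-- A communication graph on the process set `Fin n`, given by its in-neighborhoods
`In p = {q : (q,p) is an edge}`; it contains all self-loops. -/
structure CommGraph (n : ℕ) where
  In : Fin n → Finset (Fin n)
  self_mem : ∀ p, p ∈ In p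

/-- `Edge G a b` iff there is a directed edge from `a` to `b`, i.e. `a ∈ In^G(b)`. -/
def CommGraph.Edge {n : ℕ} (G : CommGraph n) (a b : Fin n) : Prop := a ∈ G.In b

/-- `G` is transitively closed. -/
def TransClosed {n : ℕ} (G : CommGraph n) : Prop :=
  ∀ a b c : Fin n, G.Edge a b → G.Edge b c → G.Edge a c

/-- `G` is unilaterally connected: for distinct `a`, `b` there is a directed path
from `a` to `b` or from `b` to `a`. -/
def Unilateral {n : ℕ} (G : CommGraph n) : Prop :=
  ∀ a b : Fin n, a ≠ b →
    Relation.ReflTransGen G.Edge a b ∨ Relation.ReflTransGen G.Edge b a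

/-- `R` is a root component of `G`: a strongly connected component
with no incoming edges from outside it. -/
def IsRootComponent {n : ℕ} (G : CommGraph n) (R : Finset (Fin n)) : Prop :=
  R.Nonempty ∧
  (∀ a ∈ R, ∀ b ∈ R, Relation.ReflTransGen G.Edge a b) ∧
  (∀ a : Fin n, a ∉ R → ∀ b ∈ R, ¬ G.Edge a b) ∧
  (∀ R' : Finset (Fin n), R ⊆ R' →
    (∀ a ∈ R', ∀ b ∈ R', Relation.ReflTransGen G.Edge a b) → R' = R)

/-- `K` (a family of finsets of vertices) is an abstract simplicial complex:
faces are nonempty and the family is closed under nonempty subsets. -/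
def IsComplex {V : Type*} (K : Set (Finset V)) : Prop :=
  (∀ s ∈ K, s.Nonempty) ∧ ∀ s ∈ K, ∀ t : Finset V, t ⊆ s → t.Nonempty → t ∈ K

/-- `s` is a facet (inclusion-maximal face) of `K`. -/
def IsFacet {V : Type*} (K : Set (Finset V)) (s : Finset V) : Prop :=
  s ∈ K ∧ ∀ t ∈ K, s ⊆ t → s = t

/-- The coloring `χ` is proper on `K`: injective on every face. -/
def IsChromatic {n : ℕ} {V : Type*} (χ : V → Fin n) (K : Set (Finset V)) : Prop :=
  ∀ s ∈ K, Set.InjOn χ ↑s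

/-- `K` is pure of dimension `n-1`: every facet has `n` vertices. -/
def IsPure {V : Type*} (n : ℕ) (K : Set (Finset V)) : Prop :=
  ∀ s : Finset V, IsFacet K s → s.card = n

/-- `F|_S`: the face of `F` consisting of the vertices whose color lies in `S`. -/
def restrict {n : ℕ} {V : Type*} (χ : V → Fin n) (F : Finset V) (S : Finset (Fin n)) :
    Finset V :=
  F.filter (fun v => χ v ∈ S)

/-- The facet of the protocol complex generated from the facet `F` by the
communication graph `G`: `{(p, F|_{In^G(p)}) : p ∈ Π}`. -/
def facetOf {n : ℕ} {V : Type*} [DecidableEq V] (χ : V → Fin n) (F : Finset V)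
    (G : CommGraph n) : Finset (Fin n × Finset V) :=
  Finset.univ.image (fun p => (p, restrict χ F (G.In p)))

/-- The complex generated by a set `M` of facets: all nonempty subsets of members of `M`. -/
def facesOf {W : Type*} (M : Set (Finset W)) : Set (Finset W) :=
  {s | s.Nonempty ∧ ∃ t ∈ M, s ⊆ t}

/-- The protocol complex `P(F)` for the message adversary `D` applied to the facet `F`:
one facet per graph `G ∈ D`, together with all nonempty subsets as faces. -/
def proto {n : ℕ} {V : Type*} [DecidableEq V] (D : Set (CommGraph n)) (χ : V → Fin n)
    (F : Finset V) : Set (Finset (Fin n × Finset V)) :=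
  facesOf {t | ∃ G ∈ D, t = facetOf χ F G}

/-- Facets of the standard chromatic subdivision of the simplex `F`. -/
def chFacets {n : ℕ} {V : Type*} [DecidableEq V] (χ : V → Fin n) (F : Finset V) :
    Set (Finset (Fin n × Finset V)) :=
  {s | ∃ τ : Fin n → Finset V,
    (∀ i, τ i ⊆ F ∧ (τ i).Nonempty ∧ i ∈ (τ i).image χ) ∧
    (∃ π : Equiv.Perm (Fin n), ∀ i j : Fin n, i ≤ j → τ (π i) ⊆ τ (π j)) ∧
    (∀ i j : Fin n, i ∈ (τ j).image χ → τ i ⊆ τ j) ∧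
    s = Finset.univ.image (fun i => (i, τ i))}

/-- The standard chromatic subdivision `Ch(F)` as a complex (all faces). -/
def chSub {n : ℕ} {V : Type*} [DecidableEq V] (χ : V → Fin n) (F : Finset V) :
    Set (Finset (Fin n × Finset V)) :=
  facesOf (chFacets χ F)

/-- Facets of the communication pseudosphere `Ps(F)`. -/
def psFacets {n : ℕ} {V : Type*} [DecidableEq V] (χ : V → Fin n) (F : Finset V) :
    Set (Finset (Fin n × Finset V)) :=
  {s | ∃ τ : Fin n → Finset V,
    (∀ i, τ i ⊆ F ∧ (τ i).Nonempty ∧ i ∈ (τ i).image χ) ∧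
    s = Finset.univ.image (fun i => (i, τ i))}

/-- The communication pseudosphere `Ps(F)` as a complex (all faces). -/
def psFaces {n : ℕ} {V : Type*} [DecidableEq V] (χ : V → Fin n) (F : Finset V) :
    Set (Finset (Fin n × Finset V)) :=
  facesOf (psFacets χ F)

/-- `v = (p, τ)` is a vertex of `Ps(σ)`: `τ` is a nonempty face of `σ` with `p ∈ χ(τ)`. -/
def psVert {n : ℕ} {V : Type*} [DecidableEq V] (χ : V → Fin n) (σ : Finset V)
    (v : Fin n × Finset V) : Prop :=
  v.2 ⊆ σ ∧ v.2.Nonempty ∧ v.1 ∈ v.2.image χ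

/-- Heard-of sets of a sequence of communication graphs (rounds `1, 2, ...`):
`HO G 0 p = {p}` and `HO G (k+1) p = ⋃_{q ∈ In^{G (k+1)}(p)} HO G k q`. -/
def HO {n : ℕ} (G : ℕ → CommGraph n) : ℕ → Fin n → Finset (Fin n)
  | 0, p => {p}
  | (k+1), p => ((G (k+1)).In p).biUnion (fun q => HO G k q)

/-- The round-`k` view of process `p` under the graph sequence `G`, encoded as the set of
heard-of chains `[p, q_k, q_{k-1}, …]`; this encoding determines and is determined by the
usual recursive view `h_k(p) = {(q, h_{k-1}(q)) : q ∈ In^{G k}(p)}`. -/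
def chains {n : ℕ} (G : ℕ → CommGraph n) : ℕ → Fin n → Finset (List (Fin n))
  | 0, p => {[p]}
  | (k+1), p => ((G (k+1)).In p).biUnion (fun q => (chains G k q).image (List.cons p))

/-- The facet of the `r`-round uninterpreted protocol complex generated by the
graph sequence `G`: `{(p, h_r(p)) : p ∈ Π}`. -/
def facetAt {n : ℕ} (G : ℕ → CommGraph n) (r : ℕ) : Finset (Fin n × Finset (List (Fin n))) :=
  Finset.univ.image (fun p => (p, chains G r p))

/-- The set `∪h` of processes ever heard of in a view `h` (in chain encoding). -/
def HOs {n : ℕ} (h : Finset (List (Fin n))) : Finset (Fin n) :=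
  h.biUnion (fun l => l.toFinset)

/-- `G` is a length-`r` graph sequence of the oblivious message adversary `D`
(rounds `1, …, r`). -/
def InD {n : ℕ} (D : Set (CommGraph n)) (r : ℕ) (G : ℕ → CommGraph n) : Prop :=
  ∀ k : ℕ, 1 ≤ k → k ≤ r → G k ∈ D

/-- The border `Bd(P_r) = P^r(∂σ₀)` of the `r`-round protocol complex: faces of `P_r`
carried by a proper face of the input simplex, i.e. all of whose vertices ever heard
only from processes in a fixed proper subset of `Π`. -/
def Border {n : ℕ} (D : Set (CommGraph n)) (r : ℕ) :
    Set (Finset (Fin n × Finset (List (Fin n)))) :=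
  {s | s.Nonempty ∧ (∃ G : ℕ → CommGraph n, InD D r G ∧ s ⊆ facetAt G r) ∧
    ∃ C : Finset (Fin n), C ≠ Finset.univ ∧ ∀ v ∈ s, HOs v.2 ⊆ C}

/-- An `r`-round consensus decision for `D`: decision functions on round-`r` views
satisfying agreement and (strong) validity in every feasible `r`-round execution. -/
def ConsensusDecision {n : ℕ} (D : Set (CommGraph n)) (r : ℕ)
    (δ : Fin n → Finset (List (Fin n)) → Fin n) : Prop :=
  ∀ G : ℕ → CommGraph n, InD D r G →
    (∀ p q : Fin n, δ p (chains G r p) = δ q (chains G r q)) ∧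
    (∀ p : Fin n, δ p (chains G r p) ∈ HO G r p)

/-- If `χ` is injective on `σ` and `σ.card = n`, and `t = σ|_S ⊆ τ` with `χ` injective
on `τ`, then `τ|_S = t`. -/
lemma restrict_eq_of_subset {n : ℕ} {V : Type*} [DecidableEq V] (χ : V → Fin n)
    (σ τ : Finset V) (hσinj : Set.InjOn χ ↑σ) (hσcard : σ.card = n)
    (hτinj : Set.InjOn χ ↑τ) (S : Finset (Fin n)) (htτ : restrict χ σ S ⊆ τ) :
    restrict χ τ S = restrict χ σ S := by
  have hsurj : σ.image χ = Finset.univ := by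
    apply Finset.eq_univ_of_card
    rw [Finset.card_image_of_injOn hσinj, hσcard, Fintype.card_fin]
  apply Finset.Subset.antisymm
  · intro v hv
    rw [restrict, Finset.mem_filter] at hv
    obtain ⟨hvτ, hvS⟩ := hv
    have : χ v ∈ σ.image χ := by rw [hsurj]; exact Finset.mem_univ _
    obtain ⟨w, hwσ, hwv⟩ := Finset.mem_image.mp this
    have hwt : w ∈ restrict χ σ S := by
      rw [restrict, Finset.mem_filter]; exact ⟨hwσ, hwv ▸ hvS⟩
    have : w = v := hτinj (htτ hwt) hvτ hwv
    exact this ▸ hwt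
  · intro v hv
    have hvτ : v ∈ τ := htτ hv
    rw [restrict, Finset.mem_filter] at hv ⊢
    exact ⟨hvτ, hv.2⟩

lemma proto_inter_subset {n : ℕ} {V : Type*} [DecidableEq V]
    (D : Set (CommGraph n)) (K : Set (Finset V)) (χ : V → Fin n)
    (hchr : IsChromatic χ K) (hpure : IsPure n K)
    (σ κ τ : Finset V)
    (hσ : IsFacet K σ) (hκ : IsFacet K κ) (hτ : IsFacet K τ)
    (h : σ ∩ κ = σ ∩ τ) :
    proto D χ σ ∩ proto D χ κ ⊆ proto D χ σ ∩ proto D χ τ := by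
  rintro s ⟨⟨hne, t1, ⟨G1, hG1, rfl⟩, hs1⟩, ⟨-, t2, ⟨G2, hG2, rfl⟩, hs2⟩⟩
  refine ⟨⟨hne, _, ⟨G1, hG1, rfl⟩, hs1⟩, hne, facetOf χ τ G1, ⟨G1, hG1, rfl⟩, ?_⟩
  intro v hv
  obtain ⟨p, -, hp⟩ := Finset.mem_image.mp (hs1 hv)
  obtain ⟨q, -, hq⟩ := Finset.mem_image.mp (hs2 hv)
  have hpq : p = q := by rw [← hp] at hq; exact (congrArg Prod.fst hq).symm
  subst hpq
  have heq : restrict χ σ (G1.In p) = restrict χ κ (G2.In p) := by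
    rw [← hp] at hq; exact (congrArg Prod.snd hq).symm
  have htsub : restrict χ σ (G1.In p) ⊆ τ := by
    intro w hw
    have hwσ : w ∈ σ := (Finset.filter_subset _ _) hw
    have hwκ : w ∈ κ := (Finset.filter_subset _ _) (heq ▸ hw)
    have : w ∈ σ ∩ τ := h ▸ Finset.mem_inter.mpr ⟨hwσ, hwκ⟩
    exact (Finset.mem_inter.mp this).2
  have hkey := restrict_eq_of_subset χ σ τ (hchr σ hσ.1) (hpure σ hσ)
    (hchr τ hτ.1) (G1.In p) htsub
  rw [facetOf, Finset.mem_image]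
  exact ⟨p, Finset.mem_univ _, by rw [hkey, hp]⟩

/-- boundary consistency of the protocol complex construction operator:
for facets `σ, κ, τ` of a pure chromatic `(n-1)`-complex `K`, if `σ ∩ κ = σ ∩ τ`
then `P(σ) ∩ P(κ) = P(σ) ∩ P(τ)`. -/
theorem protocol_operator_boundary_consistent
    {n : ℕ} (hn : 2 ≤ n) {V : Type*} [DecidableEq V]
    (D : Set (CommGraph n)) (hD : D.Nonempty)
    (K : Set (Finset V)) (χ : V → Fin n)
    (hK : IsComplex K) (hchr : IsChromatic χ K) (hpure : IsPure n K)
    (σ κ τ : Finset V)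
    (hσ : IsFacet K σ) (hκ : IsFacet K κ) (hτ : IsFacet K τ)
    (h : σ ∩ κ = σ ∩ τ) :
    proto D χ σ ∩ proto D χ κ = proto D χ σ ∩ proto D χ τ := by
  apply Set.Subset.antisymm
  · exact proto_inter_subset D K χ hchr hpure σ κ τ hσ hκ hτ h
  · exact proto_inter_subset D K χ hchr hpure σ τ κ hσ hτ hκ h.symm
end

section
/- Let D be any message adversary on Π and let K be a pure chromatic (n−1)-dimensional simplicial complex properly colored by Π. For any two facets σ, κ of K and any G ∈ D, let F_σ ∈ P(σ) and F_κ ∈ P(κ) be the facets generated by G. Then for every process p_i, the vertex (p_i, σ|_{In^G(p_i)}) of F_σ equals the vertex (p_i, κ|_{In^G(p_i)}) of F_κ if and only if In^G(p_i) ⊆ χ(σ ∩ κ). Consequently, every vertex of P(σ) ∩ P(κ) has its color in χ(σ ∩ κ), and P(σ) ∩ P(κ) is a complex of dimension at most dim(σ ∩ κ). -/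
/-- for facets `σ, κ` of a pure chromatic `(n-1)`-complex and `G ∈ D`,
the vertex `(p, σ|_{In^G(p)})` of the facet of `P(σ)` generated by `G` equals the vertex
`(p, κ|_{In^G(p)})` of the facet of `P(κ)` generated by `G` iff `In^G(p) ⊆ χ(σ ∩ κ)`;
consequently every vertex of `P(σ) ∩ P(κ)` has its color in `χ(σ ∩ κ)` and
`P(σ) ∩ P(κ)` has dimension at most `dim(σ ∩ κ)`. -/
theorem proto_inter_vertices
    {n : ℕ} (hn : 2 ≤ n) {V : Type*} [DecidableEq V]
    (D : Set (CommGraph n)) (hD : D.Nonempty)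
    (K : Set (Finset V)) (χ : V → Fin n)
    (hK : IsComplex K) (hchr : IsChromatic χ K) (hpure : IsPure n K)
    (σ κ : Finset V) (hσ : IsFacet K σ) (hκ : IsFacet K κ)
    (G : CommGraph n) (hG : G ∈ D) :
    (∀ p : Fin n,
      ((p, restrict χ σ (G.In p)) : Fin n × Finset V) = (p, restrict χ κ (G.In p)) ↔
        G.In p ⊆ (σ ∩ κ).image χ) ∧
    (∀ s ∈ proto D χ σ ∩ proto D χ κ,
      (∀ v ∈ s, v.1 ∈ (σ ∩ κ).image χ) ∧ s.card ≤ (σ ∩ κ).card) := by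
  have hσinj : Set.InjOn χ ↑σ := hchr σ hσ.1
  have hκinj : Set.InjOn χ ↑κ := hchr κ hκ.1
  have hσsurj : ∀ p : Fin n, ∃ x ∈ σ, χ x = p := by
    intro p
    have himg : σ.image χ = Finset.univ := by
      apply Finset.eq_univ_of_card
      rw [Finset.card_image_of_injOn hσinj, hpure σ hσ, Fintype.card_fin]
    have hp : p ∈ σ.image χ := himg ▸ Finset.mem_univ p
    simpa using hp
  have key : ∀ (S T : Finset (Fin n)) (p : Fin n), p ∈ S →
      restrict χ σ S = restrict χ κ T → p ∈ (σ ∩ κ).image χ := by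
    intro S T p hp heq
    obtain ⟨x, hxσ, hxp⟩ := hσsurj p
    have hx : x ∈ restrict χ σ S := by
      simp [restrict, hxσ, hxp, hp]
    rw [heq] at hx
    have hxκ : x ∈ κ := (Finset.mem_filter.mp hx).1
    exact Finset.mem_image.mpr ⟨x, Finset.mem_inter.mpr ⟨hxσ, hxκ⟩, hxp⟩
  constructor
  · intro p
    constructor
    · intro h
      have heq : restrict χ σ (G.In p) = restrict χ κ (G.In p) := by
        simpa using congrArg Prod.snd h
      intro q hq
      exact key _ _ q hq heq
    · intro hsub
      have heq : restrict χ σ (G.In p) = restrict χ κ (G.In p) := by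
        ext x
        simp only [restrict, Finset.mem_filter]
        constructor
        · rintro ⟨hxσ, hxS⟩
          obtain ⟨y, hy, hyx⟩ := Finset.mem_image.mp (hsub hxS)
          have hyσ : y ∈ σ := (Finset.mem_inter.mp hy).1
          have hyeq : y = x := hσinj hyσ hxσ hyx
          exact ⟨hyeq ▸ (Finset.mem_inter.mp hy).2, hxS⟩
        · rintro ⟨hxκ, hxS⟩
          obtain ⟨y, hy, hyx⟩ := Finset.mem_image.mp (hsub hxS)
          have hyκ : y ∈ κ := (Finset.mem_inter.mp hy).2
          have hyeq : y = x := hκinj hyκ hxκ hyx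
          exact ⟨hyeq ▸ (Finset.mem_inter.mp hy).1, hxS⟩
      rw [heq]
  · rintro s ⟨⟨hs1, t1, ⟨G1, hG1, rfl⟩, hsub1⟩, ⟨hs2, t2, ⟨G2, hG2, rfl⟩, hsub2⟩⟩
    have hcol : ∀ v ∈ s, v.1 ∈ (σ ∩ κ).image χ := by
      intro v hv
      obtain ⟨p, -, hpv⟩ := Finset.mem_image.mp (hsub1 hv)
      obtain ⟨q, -, hqv⟩ := Finset.mem_image.mp (hsub2 hv)
      have hp1 : v.1 = p := by rw [← hpv]
      have hq1 : v.1 = q := by rw [← hqv]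
      have hpq : q = p := by rw [← hp1, hq1]
      have heq : restrict χ σ (G1.In p) = restrict χ κ (G2.In p) := by
        have h2 : v.2 = restrict χ σ (G1.In p) := by rw [← hpv]
        have h3 : v.2 = restrict χ κ (G2.In q) := by rw [← hqv]
        rw [← h2, h3, hpq]
      rw [hp1]
      exact key _ _ p (G1.self_mem p) heq
    refine ⟨hcol, ?_⟩
    have hinj : Set.InjOn (fun v : Fin n × Finset V => v.1) (↑s : Set (Fin n × Finset V)) := by
      intro v hv w hw hvw
      obtain ⟨p, -, hpv⟩ := Finset.mem_image.mp (hsub1 hv)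
      obtain ⟨q, -, hqw⟩ := Finset.mem_image.mp (hsub1 hw)
      have hp1 : v.1 = p := by rw [← hpv]
      have hq1 : w.1 = q := by rw [← hqw]
      have : p = q := by rw [← hp1, ← hq1]; exact hvw
      rw [← hpv, ← hqw, this]
    calc s.card = (s.image (fun v => v.1)).card := (Finset.card_image_of_injOn hinj).symm
      _ ≤ ((σ ∩ κ).image χ).card := by
          apply Finset.card_le_card
          intro q hq
          obtain ⟨v, hv, rfl⟩ := Finset.mem_image.mp hq
          exact hcol v hv
      _ ≤ (σ ∩ κ).card := Finset.card_image_le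
end

section
/- Let D be any message adversary on Π and let K be a pure chromatic (n−1)-dimensional simplicial complex properly colored by Π. Extend the protocol complex construction operator P from facets to arbitrary faces by setting P(ρ) := P(σ) ∩ P(κ) for any two facets σ, κ of K with σ ∩ κ = ρ (this is well defined by boundary consistency). Then P is strict: for any two faces σ, κ of K with σ ∩ κ ≠ ∅, P(σ ∩ κ) = P(σ) ∩ P(κ). -/
section Aux

variable {n : ℕ} {V : Type*} [DecidableEq V]

lemma restrict_eq_of_inj (χ : V → Fin n) {ρ F : Finset V}
    (hsub : ρ ⊆ F) (hinj : Set.InjOn χ ↑F) {S : Finset (Fin n)}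
    (hS : S ⊆ ρ.image χ) : restrict χ F S = restrict χ ρ S := by
  apply Finset.Subset.antisymm
  · intro v hv
    simp only [restrict, Finset.mem_filter] at hv ⊢
    obtain ⟨hvF, hvS⟩ := hv
    obtain ⟨w, hwρ, hw⟩ := Finset.mem_image.mp (hS hvS)
    have hwv : w = v := hinj (hsub hwρ) hvF hw
    exact ⟨hwv ▸ hwρ, hvS⟩
  · intro v hv
    simp only [restrict, Finset.mem_filter] at hv ⊢
    exact ⟨hsub hv.1, hv.2⟩

lemma image_restrict (χ : V → Fin n) (ρ : Finset V)
    {S : Finset (Fin n)} (hS : S ⊆ ρ.image χ) : (restrict χ ρ S).image χ = S := by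
  apply Finset.Subset.antisymm
  · intro c hc
    obtain ⟨v, hv, rfl⟩ := Finset.mem_image.mp hc
    exact (Finset.mem_filter.mp hv).2
  · intro c hc
    obtain ⟨w, hwρ, rfl⟩ := Finset.mem_image.mp (hS hc)
    exact Finset.mem_image.mpr ⟨w, Finset.mem_filter.mpr ⟨hwρ, hc⟩, rfl⟩

/-- The intrinsic description of the extension of the protocol operator to faces. -/
def protoQ (D : Set (CommGraph n)) (χ : V → Fin n) (ρ : Finset V) :
    Set (Finset (Fin n × Finset V)) :=
  {s | s.Nonempty ∧ ∃ G ∈ D, ∀ v ∈ s,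
    G.In v.1 ⊆ ρ.image χ ∧ v.2 = restrict χ ρ (G.In v.1)}

lemma mem_proto {D : Set (CommGraph n)} {χ : V → Fin n} {F : Finset V}
    {s : Finset (Fin n × Finset V)} :
    s ∈ proto D χ F ↔ s.Nonempty ∧ ∃ G ∈ D, s ⊆ facetOf χ F G := by
  constructor
  · rintro ⟨hne, t, ⟨G, hG, rfl⟩, hsub⟩; exact ⟨hne, G, hG, hsub⟩
  · rintro ⟨hne, G, hG, hsub⟩; exact ⟨hne, _, ⟨G, hG, rfl⟩, hsub⟩

lemma mem_facetOf {χ : V → Fin n} {F : Finset V} {G : CommGraph n}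
    {v : Fin n × Finset V} :
    v ∈ facetOf χ F G ↔ v.2 = restrict χ F (G.In v.1) := by
  constructor
  · intro hv
    obtain ⟨p, -, hp⟩ := Finset.mem_image.mp hv
    rw [← hp]
  · intro hv
    refine Finset.mem_image.mpr ⟨v.1, Finset.mem_univ _, ?_⟩
    rw [← hv]

lemma facet_colors {K : Set (Finset V)} {χ : V → Fin n}
    (hchr : IsChromatic χ K) (hpure : IsPure n K) {F : Finset V} (hF : IsFacet K F) :
    F.image χ = Finset.univ := by
  apply Finset.eq_univ_of_card
  rw [Finset.card_image_of_injOn (hchr F hF.1), hpure F hF, Fintype.card_fin]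

/-- Key lemma: the intersection of the protocol complexes of two facets depends only
on the intersection of the facets. -/
lemma proto_inter_facets {D : Set (CommGraph n)} {K : Set (Finset V)} {χ : V → Fin n}
    (hchr : IsChromatic χ K) (hpure : IsPure n K) {F F' : Finset V}
    (hF : IsFacet K F) (hF' : IsFacet K F') :
    proto D χ F ∩ proto D χ F' = protoQ D χ (F ∩ F') := by
  have hinjF : Set.InjOn χ ↑F := hchr F hF.1
  have hinjF' : Set.InjOn χ ↑F' := hchr F' hF'.1
  ext s
  constructor
  · rintro ⟨h1, h2⟩
    obtain ⟨hne, G, hG, hsub⟩ := mem_proto.mp h1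
    obtain ⟨-, G', hG', hsub'⟩ := mem_proto.mp h2
    refine ⟨hne, G, hG, fun v hv => ?_⟩
    have e1 : v.2 = restrict χ F (G.In v.1) := mem_facetOf.mp (hsub hv)
    have e2 : v.2 = restrict χ F' (G'.In v.1) := mem_facetOf.mp (hsub' hv)
    have hτ : v.2 ⊆ F ∩ F' := by
      intro w hw
      exact Finset.mem_inter.mpr
        ⟨Finset.filter_subset _ _ (e1 ▸ hw), Finset.filter_subset _ _ (e2 ▸ hw)⟩
    have hScol : G.In v.1 ⊆ (F ∩ F').image χ := by
      intro c hc
      have : c ∈ F.image χ := (facet_colors hchr hpure hF).symm ▸ Finset.mem_univ c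
      obtain ⟨w, hwF, rfl⟩ := Finset.mem_image.mp this
      have : w ∈ restrict χ F (G.In v.1) := Finset.mem_filter.mpr ⟨hwF, hc⟩
      exact Finset.mem_image.mpr ⟨w, hτ (e1 ▸ this), rfl⟩
    refine ⟨hScol, ?_⟩
    rw [e1, restrict_eq_of_inj χ Finset.inter_subset_left hinjF hScol]
  · rintro ⟨hne, G, hG, hQ⟩
    constructor
    · refine mem_proto.mpr ⟨hne, G, hG, fun v hv => ?_⟩
      refine mem_facetOf.mpr ?_
      rw [(hQ v hv).2, restrict_eq_of_inj χ Finset.inter_subset_left hinjF (hQ v hv).1]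
    · refine mem_proto.mpr ⟨hne, G, hG, fun v hv => ?_⟩
      refine mem_facetOf.mpr ?_
      rw [(hQ v hv).2, restrict_eq_of_inj χ Finset.inter_subset_right hinjF' (hQ v hv).1]

lemma protoQ_inter {D : Set (CommGraph n)} {χ : V → Fin n}
    {σ κ : Finset V} (hσ : Set.InjOn χ ↑σ) (hκ : Set.InjOn χ ↑κ) :
    protoQ D χ (σ ∩ κ) = protoQ D χ σ ∩ protoQ D χ κ := by
  ext s
  constructor
  · rintro ⟨hne, G, hG, hQ⟩
    constructor
    · refine ⟨hne, G, hG, fun v hv => ?_⟩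
      have h1 := (hQ v hv).1
      have hS : G.In v.1 ⊆ σ.image χ :=
        h1.trans (Finset.image_subset_image Finset.inter_subset_left)
      exact ⟨hS, by
        rw [(hQ v hv).2, restrict_eq_of_inj χ Finset.inter_subset_left hσ h1]⟩
    · refine ⟨hne, G, hG, fun v hv => ?_⟩
      have h1 := (hQ v hv).1
      have hS : G.In v.1 ⊆ κ.image χ :=
        h1.trans (Finset.image_subset_image Finset.inter_subset_right)
      exact ⟨hS, by
        rw [(hQ v hv).2, restrict_eq_of_inj χ Finset.inter_subset_right hκ h1]⟩
  · rintro ⟨⟨hne, G, hG, hQ⟩, ⟨-, G', hG', hQ'⟩⟩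
    refine ⟨hne, G, hG, fun v hv => ?_⟩
    obtain ⟨hS, e⟩ := hQ v hv
    obtain ⟨hS', e'⟩ := hQ' v hv
    have hcol : (v.2).image χ = G.In v.1 := by rw [e]; exact image_restrict χ σ hS
    have hcol' : (v.2).image χ = G'.In v.1 := by rw [e']; exact image_restrict χ κ hS'
    have hGG : G.In v.1 = G'.In v.1 := by rw [← hcol, hcol']
    have hτ : v.2 ⊆ σ ∩ κ := by
      intro w hw
      exact Finset.mem_inter.mpr
        ⟨Finset.filter_subset _ _ (e ▸ hw), Finset.filter_subset _ _ (e' ▸ hw)⟩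
    have hSin : G.In v.1 ⊆ (σ ∩ κ).image χ := by
      rw [← hcol]; exact Finset.image_subset_image hτ
    refine ⟨hSin, ?_⟩
    rw [e, restrict_eq_of_inj χ Finset.inter_subset_left hσ hSin]

end Aux

/-- strictness of the extended operator: if `Pe` extends the protocol
complex construction operator to faces via `Pe(ρ) = P(σ) ∩ P(κ)` whenever `ρ = σ ∩ κ`
for facets `σ, κ` (well defined by boundary consistency), and every face of `K` is an
intersection of two facets, then for any two faces `σ, κ` of `K` with `σ ∩ κ ≠ ∅`,
`Pe(σ ∩ κ) = Pe(σ) ∩ Pe(κ)`. -/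
theorem proto_extension_strict
    {n : ℕ} (hn : 2 ≤ n) {V : Type*} [DecidableEq V]
    (D : Set (CommGraph n)) (hD : D.Nonempty)
    (K : Set (Finset V)) (χ : V → Fin n)
    (hK : IsComplex K) (hchr : IsChromatic χ K) (hpure : IsPure n K)
    (Pe : Finset V → Set (Finset (Fin n × Finset V)))
    (hPe : ∀ ρ σ κ : Finset V, IsFacet K σ → IsFacet K κ → σ ∩ κ = ρ →
      Pe ρ = proto D χ σ ∩ proto D χ κ)
    (hcover : ∀ ρ ∈ K, ∃ σ κ : Finset V, IsFacet K σ ∧ IsFacet K κ ∧ σ ∩ κ = ρ)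
    (σ κ : Finset V) (hσ : σ ∈ K) (hκ : κ ∈ K) (hne : (σ ∩ κ).Nonempty) :
    Pe (σ ∩ κ) = Pe σ ∩ Pe κ := by
  have hρK : σ ∩ κ ∈ K := hK.2 σ hσ (σ ∩ κ) Finset.inter_subset_left hne
  have key : ∀ ρ ∈ K, Pe ρ = protoQ D χ ρ := by
    intro ρ hρ
    obtain ⟨F, F', hF, hF', hFF⟩ := hcover ρ hρ
    rw [hPe ρ F F' hF hF' hFF, proto_inter_facets hchr hpure hF hF', hFF]
  rw [key _ hρK, key _ hσ, key _ hκ, protoQ_inter (hchr σ hσ) (hchr κ hκ)]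
end

section
/- Let σ_0 = {(p_1,{p_1}), …, (p_n,{p_n})} be the uninterpreted input simplex, properly colored by χ((p_i,·)) = p_i, and let D be the set of all communication graphs on Π that are transitively closed and unilaterally connected. Then the protocol complex of D applied to σ_0 equals the standard chromatic subdivision of σ_0: P(σ_0) = Ch(σ_0). -/
section ProtoChAux

variable {n : ℕ}

/-- The input simplex `σ₀`. -/
def F0 (n : ℕ) : Finset (Fin n × Finset (Fin n)) :=
  Finset.univ.image (fun p : Fin n => (p, ({p} : Finset (Fin n))))

lemma mem_F0 {v : Fin n × Finset (Fin n)} : v ∈ F0 n ↔ v.2 = {v.1} := by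
  constructor
  · intro h
    simp only [F0, Finset.mem_image, Finset.mem_univ, true_and] at h
    obtain ⟨p, hp⟩ := h
    cases hp; rfl
  · intro h
    simp only [F0, Finset.mem_image, Finset.mem_univ, true_and]
    exact ⟨v.1, by rw [← h]⟩

lemma mem_restrict_F0 {v : Fin n × Finset (Fin n)} {S : Finset (Fin n)} :
    v ∈ restrict Prod.fst (F0 n) S ↔ v.2 = {v.1} ∧ v.1 ∈ S := by
  simp only [restrict, Finset.mem_filter, mem_F0]

lemma restrict_mono {S T : Finset (Fin n)} (h : S ⊆ T) :
    restrict Prod.fst (F0 n) S ⊆ restrict Prod.fst (F0 n) T := by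
  intro v hv
  rcases mem_restrict_F0.1 hv with ⟨h2, h1⟩
  exact mem_restrict_F0.2 ⟨h2, h h1⟩

lemma image_fst_restrict (S : Finset (Fin n)) :
    (restrict Prod.fst (F0 n) S).image Prod.fst = S := by
  ext i
  simp only [Finset.mem_image]
  constructor
  · rintro ⟨v, hv, rfl⟩; exact (mem_restrict_F0.1 hv).2
  · intro hi; exact ⟨(i, {i}), mem_restrict_F0.2 ⟨rfl, hi⟩, rfl⟩

lemma restrict_image_fst {t : Finset (Fin n × Finset (Fin n))} (ht : t ⊆ F0 n) :
    restrict Prod.fst (F0 n) (t.image Prod.fst) = t := by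
  ext v
  rw [mem_restrict_F0]
  constructor
  · rintro ⟨h2, h1⟩
    obtain ⟨w, hw, hwv⟩ := Finset.mem_image.1 h1
    have hw2 := mem_F0.1 (ht hw)
    have hwe : w = v := Prod.ext hwv (by rw [hw2, hwv, h2])
    rwa [← hwe]
  · intro hv
    exact ⟨mem_F0.1 (ht hv), Finset.mem_image_of_mem _ hv⟩

lemma facets_eq_chFacets :
    {t | ∃ G ∈ {G : CommGraph n | TransClosed G ∧ Unilateral G}, t = facetOf Prod.fst (F0 n) G}
      = chFacets Prod.fst (F0 n) := by
  ext s
  constructor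
  · rintro ⟨G, ⟨hT, hU⟩, rfl⟩
    set τ : Fin n → Finset (Fin n × Finset (Fin n)) :=
      fun p => restrict Prod.fst (F0 n) (G.In p) with hτdef
    have hmem : ∀ i : Fin n, (i, ({i} : Finset (Fin n))) ∈ τ i :=
      fun i => mem_restrict_F0.2 ⟨rfl, G.self_mem i⟩
    have edge_of_rtg : ∀ a b, Relation.ReflTransGen G.Edge a b → G.Edge a b := by
      intro a b h
      induction h with
      | refl => exact G.self_mem a
      | tail _ hbc ih => exact hT _ _ _ ih hbc
    have hIn : ∀ a b, G.Edge a b → G.In a ⊆ G.In b := by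
      intro a b hab x hx
      exact hT x a b hx hab
    have htot : ∀ a b : Fin n, τ a ⊆ τ b ∨ τ b ⊆ τ a := by
      intro a b
      rcases eq_or_ne a b with rfl | hne
      · exact Or.inl (subset_refl _)
      · rcases hU a b hne with h | h
        · exact Or.inl (restrict_mono (hIn a b (edge_of_rtg _ _ h)))
        · exact Or.inr (restrict_mono (hIn b a (edge_of_rtg _ _ h)))
    refine ⟨τ, ?_, ?_, ?_, rfl⟩
    · intro i
      refine ⟨Finset.filter_subset _ _, ⟨_, hmem i⟩, ?_⟩
      exact Finset.mem_image.2 ⟨_, hmem i, rfl⟩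
    · refine ⟨Tuple.sort (fun i => (τ i).card), ?_⟩
      intro i j hij
      have hc := Tuple.monotone_sort (fun i => (τ i).card) hij
      rcases htot (Tuple.sort (fun i => (τ i).card) i) (Tuple.sort (fun i => (τ i).card) j)
        with h | h
      · exact h
      · exact le_of_eq (Finset.eq_of_subset_of_card_le h hc).symm
    · intro i j hij
      rw [hτdef, image_fst_restrict] at hij
      exact restrict_mono (hIn i j hij)
  · rintro ⟨τ, hτ, ⟨π, hπ⟩, hcoh, rfl⟩
    set G : CommGraph n := ⟨fun p => (τ p).image Prod.fst, fun p => (hτ p).2.2⟩ with hGdef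
    have hchain : ∀ a b : Fin n, τ a ⊆ τ b ∨ τ b ⊆ τ a := by
      intro a b
      rcases le_total (π.symm a) (π.symm b) with h | h
      · have := hπ _ _ h
        rw [π.apply_symm_apply, π.apply_symm_apply] at this
        exact Or.inl this
      · have := hπ _ _ h
        rw [π.apply_symm_apply, π.apply_symm_apply] at this
        exact Or.inr this
    have hTC : TransClosed G := by
      intro a b c hab hbc
      exact Finset.image_subset_image (hcoh b c hbc) hab
    have hUni : Unilateral G := by
      intro a b _
      rcases hchain a b with h | h
      · exact Or.inl (Relation.ReflTransGen.single
          (Finset.image_subset_image h ((hτ a).2.2)))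
      · exact Or.inr (Relation.ReflTransGen.single
          (Finset.image_subset_image h ((hτ b).2.2)))
    refine ⟨G, ⟨hTC, hUni⟩, ?_⟩
    unfold facetOf
    apply Finset.image_congr
    intro p _
    have h : restrict Prod.fst (F0 n) (G.In p) = τ p := restrict_image_fst (hτ p).1
    show (p, τ p) = (p, restrict Prod.fst (F0 n) (G.In p))
    rw [h]

end ProtoChAux

/-- for the message adversary consisting of all transitively closed and
unilaterally connected communication graphs, the protocol complex of the uninterpreted
input simplex `σ₀ = {(p₁,{p₁}), …, (pₙ,{pₙ})}` (colored by the first component) equals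
its standard chromatic subdivision: `P(σ₀) = Ch(σ₀)`. -/
theorem proto_eq_chromaticSubdivision_input
    {n : ℕ} (hn : 2 ≤ n) :
    proto {G : CommGraph n | TransClosed G ∧ Unilateral G}
        (Prod.fst : Fin n × Finset (Fin n) → Fin n)
        (Finset.univ.image (fun p : Fin n => (p, ({p} : Finset (Fin n))))) =
      chSub (Prod.fst : Fin n × Finset (Fin n) → Fin n)
        (Finset.univ.image (fun p : Fin n => (p, ({p} : Finset (Fin n))))) := by
  show proto _ Prod.fst (F0 n) = chSub Prod.fst (F0 n)
  unfold proto chSub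
  exact congrArg facesOf facets_eq_chFacets
end

section
/- Let σ_1, …, σ_n ⊆ Π with p_i ∈ σ_i for all i, and suppose there is a permutation π of {1,…,n} with σ_{π(1)} ⊆ σ_{π(2)} ⊆ … ⊆ σ_{π(n)} and that for all i, j, p_i ∈ σ_j implies σ_i ⊆ σ_j. Then the directed graph G on Π with edge set {(q, p_i) : q ∈ σ_i} is a transitively closed, unilaterally connected communication graph satisfying In^G(p_i) = σ_i for all i. -/
/-- if `σᵢ ⊆ Π` with `pᵢ ∈ σᵢ`, the `σᵢ` can be ordered into a chain by a
permutation, and `pᵢ ∈ σⱼ` implies `σᵢ ⊆ σⱼ`, then the graph with edge set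
`{(q, pᵢ) : q ∈ σᵢ}` is a transitively closed, unilaterally connected communication graph
with `In(pᵢ) = σᵢ`. -/
theorem graph_of_ordered_sets_transClosed_unilateral
    {n : ℕ} (hn : 2 ≤ n) (σ : Fin n → Finset (Fin n))
    (hself : ∀ i, i ∈ σ i)
    (hchain : ∃ π : Equiv.Perm (Fin n), ∀ i j : Fin n, i ≤ j → σ (π i) ⊆ σ (π j))
    (hmono : ∀ i j : Fin n, i ∈ σ j → σ i ⊆ σ j) :
    ∃ G : CommGraph n, (∀ i, G.In i = σ i) ∧ TransClosed G ∧ Unilateral G := by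
  refine ⟨⟨σ, hself⟩, fun i => rfl, ?_, ?_⟩
  · intro a b c hab hbc
    exact hmono b c hbc hab
  · intro a b hab
    obtain ⟨π, hπ⟩ := hchain
    have key : σ a ⊆ σ b ∨ σ b ⊆ σ a := by
      rcases le_total (π.symm a) (π.symm b) with h | h
      · left; have := hπ _ _ h; simpa using this
      · right; have := hπ _ _ h; simpa using this
    rcases key with h | h
    · exact Or.inl (Relation.ReflTransGen.single (h (hself a)))
    · exact Or.inr (Relation.ReflTransGen.single (h (hself b)))
end

section
/- Let G_1, …, G_r be communication graphs on Π and suppose G_r is rooted with root component R. Then (a) every nonempty set S ⊆ Π satisfying ⋃_{p∈S} HO_r(p) ⊆ S contains R; (b) the intersection of any two such sets is again a nonempty set with this property; consequently (c) there is a unique inclusion-minimal nonempty set S ⊆ Π with ⋃_{p∈S} HO_r(p) ⊆ S (the border component is unique). -/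

lemma mem_HO_self {n : ℕ} (G : ℕ → CommGraph n) : ∀ k p, p ∈ HO G k p
  | 0, p => by simp [HO]
  | (k+1), p => by
    simp only [HO, Finset.mem_biUnion]
    exact ⟨p, (G (k+1)).self_mem p, mem_HO_self G k p⟩

lemma In_subset_HO {n : ℕ} (G : ℕ → CommGraph n) {r : ℕ} (hr : 1 ≤ r)
    {p q : Fin n} (h : q ∈ (G r).In p) : q ∈ HO G r p := by
  cases r with
  | zero => omega
  | succ k =>
    simp only [HO, Finset.mem_biUnion]
    exact ⟨q, h, mem_HO_self G k q⟩

lemma closed_back {n : ℕ} (G : ℕ → CommGraph n) {r : ℕ} (hr : 1 ≤ r)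
    {S : Finset (Fin n)} (hS : ∀ p ∈ S, HO G r p ⊆ S)
    {a p : Fin n} (hap : Relation.ReflTransGen (G r).Edge a p) (hp : p ∈ S) : a ∈ S := by
  induction hap using Relation.ReflTransGen.head_induction_on with
  | refl => exact hp
  | head h _ ih => exact hS _ ih (In_subset_HO G hr h)

lemma exists_max_ancestor {n : ℕ} (Gr : CommGraph n) (p : Fin n) :
    ∃ a, Relation.ReflTransGen Gr.Edge a p ∧
      ∀ b, Relation.ReflTransGen Gr.Edge b a → Relation.ReflTransGen Gr.Edge a b := by
  classical
  suffices h : ∀ m (a : Fin n), (Finset.univ.filter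
      (fun b => Relation.ReflTransGen Gr.Edge b a)).card ≤ m →
      ∃ a', Relation.ReflTransGen Gr.Edge a' a ∧
        ∀ b, Relation.ReflTransGen Gr.Edge b a' → Relation.ReflTransGen Gr.Edge a' b by
    exact h n p ((Finset.card_le_univ _).trans (by simp))
  intro m
  induction m with
  | zero =>
    intro a ha
    exfalso
    have : a ∈ Finset.univ.filter (fun b => Relation.ReflTransGen Gr.Edge b a) :=
      Finset.mem_filter.mpr ⟨Finset.mem_univ a, .refl⟩
    have := Finset.card_pos.mpr ⟨a, this⟩
    omega
  | succ m ih =>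
    intro a ha
    by_cases hall : ∀ b, Relation.ReflTransGen Gr.Edge b a → Relation.ReflTransGen Gr.Edge a b
    · exact ⟨a, .refl, hall⟩
    · push_neg at hall
      obtain ⟨b, hba, hnab⟩ := hall
      have hsub : Finset.univ.filter (fun c => Relation.ReflTransGen Gr.Edge c b) ⊆
          Finset.univ.filter (fun c => Relation.ReflTransGen Gr.Edge c a) := by
        intro c hc
        simp only [Finset.mem_filter, Finset.mem_univ, true_and] at hc ⊢
        exact hc.trans hba
      have hss : Finset.univ.filter (fun c => Relation.ReflTransGen Gr.Edge c b) ⊂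
          Finset.univ.filter (fun c => Relation.ReflTransGen Gr.Edge c a) := by
        rw [Finset.ssubset_iff_of_subset hsub]
        refine ⟨a, Finset.mem_filter.mpr ⟨Finset.mem_univ a, .refl⟩, ?_⟩
        simp only [Finset.mem_filter, Finset.mem_univ, true_and]
        exact hnab
      have := Finset.card_lt_card hss
      obtain ⟨a', h1, h2⟩ := ih b (by omega)
      exact ⟨a', h1.trans hba, h2⟩

lemma reach_from_root {n : ℕ} (Gr : CommGraph n) (R : Finset (Fin n))
    (huniq : ∀ R', IsRootComponent Gr R' → R' = R) (p : Fin n) :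
    ∃ a ∈ R, Relation.ReflTransGen Gr.Edge a p := by
  classical
  obtain ⟨a, hap, hmax⟩ := exists_max_ancestor Gr p
  set R' := Finset.univ.filter (fun b => Relation.ReflTransGen Gr.Edge a b ∧
    Relation.ReflTransGen Gr.Edge b a) with hR'
  have hmem : ∀ b, b ∈ R' ↔ (Relation.ReflTransGen Gr.Edge a b ∧
      Relation.ReflTransGen Gr.Edge b a) := by
    intro b; simp [hR']
  have haR' : a ∈ R' := (hmem a).mpr ⟨.refl, .refl⟩
  have hroot : IsRootComponent Gr R' := by
    refine ⟨⟨a, haR'⟩, ?_, ?_, ?_⟩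
    · intro x hx y hy
      exact ((hmem x).mp hx).2.trans ((hmem y).mp hy).1
    · intro c hc b hb hedge
      apply hc
      have hca : Relation.ReflTransGen Gr.Edge c a :=
        (Relation.ReflTransGen.single hedge).trans ((hmem b).mp hb).2
      exact (hmem c).mpr ⟨hmax c hca, hca⟩
    · intro R'' hsub hconn
      apply Finset.Subset.antisymm _ hsub
      intro b hb
      exact (hmem b).mpr ⟨hconn a (hsub haR') b hb, hconn b hb a (hsub haR')⟩
  exact ⟨a, huniq R' hroot ▸ haR', hap⟩

/-- if `G_r` is rooted with root component `R`, then (a) every nonempty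
`S ⊆ Π` closed under round-`r` heard-of sets contains `R`; (b) the intersection of two such
sets is again such a set; and (c) there is a unique inclusion-minimal such set. -/
theorem border_component_unique
    {n : ℕ} (hn : 2 ≤ n) (G : ℕ → CommGraph n) (r : ℕ) (hr : 1 ≤ r)
    (R : Finset (Fin n)) (hroot : IsRootComponent (G r) R)
    (huniq : ∀ R' : Finset (Fin n), IsRootComponent (G r) R' → R' = R) :
    (∀ S : Finset (Fin n), S.Nonempty → (∀ p ∈ S, HO G r p ⊆ S) → R ⊆ S) ∧
    (∀ S T : Finset (Fin n),
      S.Nonempty → (∀ p ∈ S, HO G r p ⊆ S) →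
      T.Nonempty → (∀ p ∈ T, HO G r p ⊆ T) →
      (S ∩ T).Nonempty ∧ ∀ p ∈ S ∩ T, HO G r p ⊆ S ∩ T) ∧
    (∃! S : Finset (Fin n),
      (S.Nonempty ∧ ∀ p ∈ S, HO G r p ⊆ S) ∧
      ∀ S' : Finset (Fin n), (S'.Nonempty ∧ ∀ p ∈ S', HO G r p ⊆ S') → S' ⊆ S → S' = S) := by
  classical
  have hcontain : ∀ S : Finset (Fin n), S.Nonempty → (∀ p ∈ S, HO G r p ⊆ S) → R ⊆ S := by
    intro S ⟨p, hp⟩ hS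
    obtain ⟨a, haR, hap⟩ := reach_from_root (G r) R huniq p
    have haS : a ∈ S := closed_back G hr hS hap hp
    intro b hbR
    exact closed_back G hr hS (hroot.2.1 b hbR a haR) haS
  refine ⟨hcontain, ?_, ?_⟩
  · intro S T hSne hS hTne hT
    refine ⟨?_, ?_⟩
    · obtain ⟨x, hx⟩ := hroot.1
      exact ⟨x, Finset.mem_inter.mpr ⟨hcontain S hSne hS hx, hcontain T hTne hT hx⟩⟩
    · intro p hp
      exact Finset.subset_inter (hS p (Finset.mem_inter.mp hp).1)
        (hT p (Finset.mem_inter.mp hp).2)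
  · have hne : Nonempty (Fin n) := ⟨⟨0, by omega⟩⟩
    set 𝒮 : Finset (Finset (Fin n)) := Finset.univ.filter
      (fun S => S.Nonempty ∧ ∀ p ∈ S, HO G r p ⊆ S) with h𝒮
    have hmem𝒮 : ∀ S, S ∈ 𝒮 ↔ (S.Nonempty ∧ ∀ p ∈ S, HO G r p ⊆ S) := by
      intro S; simp [h𝒮]
    have h𝒮ne : 𝒮.Nonempty :=
      ⟨Finset.univ, (hmem𝒮 _).mpr ⟨Finset.univ_nonempty, fun p _ => Finset.subset_univ _⟩⟩
    obtain ⟨M, hM, hMmin⟩ := Finset.exists_min_image 𝒮 Finset.card h𝒮ne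
    have hMprop := (hmem𝒮 M).mp hM
    have hMisMin : ∀ S' : Finset (Fin n),
        (S'.Nonempty ∧ ∀ p ∈ S', HO G r p ⊆ S') → S' ⊆ M → S' = M := by
      intro S' hS' hsub
      exact Finset.eq_of_subset_of_card_le hsub (hMmin S' ((hmem𝒮 S').mpr hS'))
    refine ⟨M, ⟨hMprop, hMisMin⟩, ?_⟩
    intro T ⟨hTprop, hTmin⟩
    have hint : (T ∩ M).Nonempty ∧ ∀ p ∈ T ∩ M, HO G r p ⊆ T ∩ M := by
      refine ⟨?_, ?_⟩
      · obtain ⟨x, hx⟩ := hroot.1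
        exact ⟨x, Finset.mem_inter.mpr ⟨hcontain T hTprop.1 hTprop.2 hx,
          hcontain M hMprop.1 hMprop.2 hx⟩⟩
      · intro p hp
        exact Finset.subset_inter (hTprop.2 p (Finset.mem_inter.mp hp).1)
          (hMprop.2 p (Finset.mem_inter.mp hp).2)
    have h1 : T ∩ M = T := hTmin (T ∩ M) hint Finset.inter_subset_left
    have h2 : T ∩ M = M := hMisMin (T ∩ M) hint Finset.inter_subset_right
    rw [← h1, h2]
end

section
/- Let D be a message adversary, r ≥ 1, and suppose there exist graph sequences 𝒢_1, …, 𝒢_k ∈ D^r and nonempty sets S_1, …, S_k ⊆ Π such that (i) for each i, ⋃_{p ∈ S_i} HO_r^{𝒢_i}(p) ⊆ S_i, (ii) ⋂_{i=1}^k S_i = ∅, and (iii) any two of the sequences 𝒢_1, …, 𝒢_k are connected by a finite chain of sequences in D^r in which any two consecutive sequences give some process the same round-r view. Then there exists no r-round consensus decision for D; i.e., consensus cannot be solved in r rounds under the oblivious message adversary D. -/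
/-- if there are graph sequences `𝒢₁, …, 𝒢ₘ ∈ D^r` and nonempty sets
`S₁, …, Sₘ ⊆ Π` such that each `Sᵢ` is closed under round-`r` heard-of sets of `𝒢ᵢ`,
`⋂ᵢ Sᵢ = ∅`, and any two of the sequences are connected by a chain of sequences in `D^r`
in which consecutive sequences give some process the same round-`r` view, then there is
no `r`-round consensus decision for `D`. -/
theorem consensus_impossible_of_connected_incompatible
    {n : ℕ} (hn : 2 ≤ n) (D : Set (CommGraph n)) (hD : D.Nonempty)
    (r : ℕ) (hr : 1 ≤ r) (m : ℕ) (hm : 1 ≤ m)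
    (𝒢 : Fin m → ℕ → CommGraph n) (h𝒢 : ∀ i, InD D r (𝒢 i))
    (S : Fin m → Finset (Fin n)) (hSne : ∀ i, (S i).Nonempty)
    (hScl : ∀ i, ∀ p ∈ S i, HO (𝒢 i) r p ⊆ S i)
    (hint : (⋂ i, ((S i : Finset (Fin n)) : Set (Fin n))) = (∅ : Set (Fin n)))
    (hconn : ∀ i j : Fin m,
      Relation.ReflTransGen
        (fun A B : ℕ → CommGraph n =>
          InD D r A ∧ InD D r B ∧ ∃ p : Fin n, chains A r p = chains B r p)
        (𝒢 i) (𝒢 j)) :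
    ¬ ∃ δ : Fin n → Finset (List (Fin n)) → Fin n, ConsensusDecision D r δ := by
  rintro ⟨δ, hδ⟩
  have hm' : 0 < m := hm
  let i0 : Fin m := ⟨0, hm'⟩
  let p0 : Fin n := ⟨0, by omega⟩
  set v := δ p0 (chains (𝒢 i0) r p0) with hv
  have same : ∀ B, Relation.ReflTransGen
      (fun A B : ℕ → CommGraph n =>
        InD D r A ∧ InD D r B ∧ ∃ p : Fin n, chains A r p = chains B r p)
      (𝒢 i0) B → δ p0 (chains B r p0) = v := by
    intro B hB
    induction hB with
    | refl => rfl
    | tail hAB hrel ih =>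
      obtain ⟨hA, hB', p, hp⟩ := hrel
      calc δ p0 (chains _ r p0) = δ p (chains _ r p) := ((hδ _ hB').1 p0 p)
        _ = δ p (chains _ r p) := by rw [← hp]
        _ = δ p0 (chains _ r p0) := ((hδ _ hA).1 p p0)
        _ = v := ih
  have key : ∀ i : Fin m, v ∈ S i := by
    intro i
    obtain ⟨p, hp⟩ := hSne i
    have hagree := (hδ (𝒢 i) (h𝒢 i)).1 p p0
    have hval := (hδ (𝒢 i) (h𝒢 i)).2 p
    have : δ p0 (chains (𝒢 i) r p0) = v := same _ (hconn i0 i)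
    rw [hagree, this] at hval
    exact hScl i p hp hval
  have : v ∈ (⋂ i, ((S i : Finset (Fin n)) : Set (Fin n))) :=
    Set.mem_iInter.2 fun i => key i
  rw [hint] at this
  exact this
end

section
/- Let D be a message adversary such that some graph G ∈ D is not rooted, i.e., G has two disjoint root components R_1 and R_2. Then for every r ≥ 1 there exists no r-round consensus decision for D; i.e., consensus is unsolvable under the oblivious message adversary D. -/
/-- if some graph of the message adversary `D` is not rooted, i.e. has two
disjoint root components, then for every `r ≥ 1` there is no `r`-round consensus decision
for `D`: consensus is unsolvable under `D`. -/
theorem consensus_impossible_of_not_rooted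
    {n : ℕ} (hn : 2 ≤ n) (D : Set (CommGraph n))
    (G : CommGraph n) (hG : G ∈ D)
    (R₁ R₂ : Finset (Fin n))
    (h₁ : IsRootComponent G R₁) (h₂ : IsRootComponent G R₂) (hdisj : Disjoint R₁ R₂) :
    ∀ r : ℕ, 1 ≤ r → ¬ ∃ δ : Fin n → Finset (List (Fin n)) → Fin n,
      ConsensusDecision D r δ := by
  intro r _ ⟨δ, hδ⟩
  have hInD : InD D r (fun _ => G) := fun _ _ _ => hG
  obtain ⟨hagree, hvalid⟩ := hδ (fun _ => G) hInD
  -- HO stays inside a root component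
  have key : ∀ (R : Finset (Fin n)),
      (∀ a : Fin n, a ∉ R → ∀ b ∈ R, ¬ G.Edge a b) →
      ∀ k, ∀ p ∈ R, HO (fun _ => G) k p ⊆ R := by
    intro R hR k
    induction k with
    | zero =>
      intro p hp x hx
      simp only [HO, Finset.mem_singleton] at hx
      exact hx ▸ hp
    | succ k ih =>
      intro p hp x hx
      simp only [HO, Finset.mem_biUnion] at hx
      obtain ⟨q, hq, hxq⟩ := hx
      by_cases hqR : q ∈ R
      · exact ih q hqR hxq
      · exact absurd hq (hR q hqR p hp)
  obtain ⟨p, hp⟩ := h₁.1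
  obtain ⟨q, hq⟩ := h₂.1
  have hp1 : δ p (chains (fun _ => G) r p) ∈ R₁ :=
    key R₁ h₁.2.2.1 r p hp (hvalid p)
  have hq2 : δ q (chains (fun _ => G) r q) ∈ R₂ :=
    key R₂ h₂.2.2.1 r q hq (hvalid q)
  rw [hagree p q] at hp1
  exact Finset.disjoint_left.mp hdisj hp1 hq2
end
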